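/- Let X, X', Z be random variables taking values in finite types with joint probability mass function p, and for each pair (x', z) let q(· | x', z) be a probability mass function on the value type of X such that q(X | X', Z) > 0 almost surely. Then H(X' | Z) − H(X | Z) + E[ ln( p(X' | X, Z) / q(X | X', Z) ) ] ≥ 0, where p(x'|x,z) denotes the conditional pmf of X' given (X,Z) derived from the joint law. (Second-law-like entropy bound for a single subsystem: the expectation term represents the dissipated heat divided by temperature under local detailed balance with backward kernel q.) -/

import Mathlib

open scoped BigOperators

section InfoDefs

variable {Ω : Type*} [Fintype Ω]

/-- Pushforward probability mass function: `P(X = a)` for the random variable `X`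
on the finite probability space `(Ω, μ)`. -/
def prob {α : Type*} [DecidableEq α] (μ : Ω → ℝ) (X : Ω → α) (a : α) : ℝ :=
  ∑ ω, if X ω = a then μ ω else 0

/-- Shannon entropy (natural logarithm) of the random variable `X` under `μ`. -/
noncomputable def ent {α : Type*} [Fintype α] [DecidableEq α] (μ : Ω → ℝ) (X : Ω → α) : ℝ :=
  ∑ a, Real.negMulLog (prob μ X a)

/-- Conditional Shannon entropy `H(X | Y)`. -/
noncomputable def condEnt {α β : Type*} [Fintype α] [DecidableEq α] [Fintype β] [DecidableEq β]
    (μ : Ω → ℝ) (X : Ω → α) (Y : Ω → β) : ℝ :=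
  ent μ (fun ω => (X ω, Y ω)) - ent μ Y

/-- Mutual information `I(X;Y)`. -/
noncomputable def mi {α β : Type*} [Fintype α] [DecidableEq α] [Fintype β] [DecidableEq β]
    (μ : Ω → ℝ) (X : Ω → α) (Y : Ω → β) : ℝ :=
  ent μ X + ent μ Y - ent μ (fun ω => (X ω, Y ω))

/-- Conditional mutual information `I(X;Y|Z)`. -/
noncomputable def cmi {α β γ : Type*} [Fintype α] [DecidableEq α] [Fintype β] [DecidableEq β]
    [Fintype γ] [DecidableEq γ] (μ : Ω → ℝ) (X : Ω → α) (Y : Ω → β) (Z : Ω → γ) : ℝ :=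
  ent μ (fun ω => (X ω, Z ω)) + ent μ (fun ω => (Y ω, Z ω))
    - ent μ (fun ω => (X ω, Y ω, Z ω)) - ent μ Z

/-- Conditional independence of `U` and `V` given `W`:
the joint law satisfies `P(U,V,W)·P(W) = P(U,W)·P(V,W)` pointwise. -/
def CondIndep {α β γ : Type*} [DecidableEq α] [DecidableEq β] [DecidableEq γ]
    (μ : Ω → ℝ) (U : Ω → α) (V : Ω → β) (W : Ω → γ) : Prop :=
  ∀ u v w, prob μ (fun ω => (U ω, V ω, W ω)) (u, v, w) * prob μ W w
    = prob μ (fun ω => (U ω, W ω)) (u, w) * prob μ (fun ω => (V ω, W ω)) (v, w)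

/-- The tuple `(A_0, …, A_{n-1})` of the first `n` members of a family of random
variables, viewed as a single random variable valued in a (dependent) product type. -/
def tup {α : ℕ → Type*} (A : (i : ℕ) → Ω → α i) (n : ℕ) : Ω → ((i : Fin n) → α i.1) :=
  fun ω i => A i.1 ω

/-- The restriction `(A_i)_{i ∈ s}` of a family of random variables to a finite index
set `s`, viewed as a single random variable (a one-point constant if `s = ∅`). -/
def restrict {α : ℕ → Type*} (A : (i : ℕ) → Ω → α i) (s : Finset ℕ) :
    Ω → ((i : s) → α i.1) :=
  fun ω i => A i.1 ω

end InfoDefs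


/-!
The quantity is the Kullback–Leibler divergence of the joint law `p(x, x', z)` from the
"backward" law `r(x, x', z) = p(x', z) q(x | x', z)`: the entropy difference contributes
`E[ln p(X, Z) − ln p(X', Z)]`, which combines with the expectation term into
`E[ln (p(X, X', Z) / r(X, X', Z))]`. Since `q(· | x', z)` sums to one, `r` has the same total
mass as `p`, and it charges every point of positive `p`-mass, so Gibbs' inequality makes this
nonnegative.
-/

open Real

theorem sub_le_mul_log_div {p r : ℝ} (hp : 0 ≤ p) (hr : 0 ≤ r) (hpr : 0 < p → 0 < r) :
    p - r ≤ p * log (p / r) := by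
  rcases hp.eq_or_lt with rfl | hp
  · simpa using hr
  have hr := hpr hp
  calc p - r = p * (1 - (p / r)⁻¹) := by field_simp
    _ ≤ p * log (p / r) := by gcongr; exact one_sub_inv_le_log_of_pos (by positivity)

theorem sum_mul_log_div_nonneg {ι : Type*} [Fintype ι] {p r : ι → ℝ}
    (hp : ∀ i, 0 ≤ p i) (hr : ∀ i, 0 ≤ r i) (hpr : ∀ i, 0 < p i → 0 < r i)
    (hsum : ∑ i, r i ≤ ∑ i, p i) : 0 ≤ ∑ i, p i * log (p i / r i) :=
  calc 0 ≤ ∑ i, (p i - r i) := by rw [Finset.sum_sub_distrib]; linarith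
    _ ≤ ∑ i, p i * log (p i / r i) :=
      Finset.sum_le_sum fun i _ => sub_le_mul_log_div (hp i) (hr i) (hpr i)

theorem log_sub_log_add_log_div_div {a b c d : ℝ} (ha : 0 < a) (hb : 0 < b) (hc : 0 < c)
    (hd : 0 < d) : log a - log b + log (c / a / d) = log (c / (b * d)) := by
  rw [log_div (by positivity) hd.ne', log_div hc.ne' ha.ne', log_div hc.ne' (by positivity),
    log_mul hb.ne' hd.ne']
  ring

section Prob

variable {Ω α : Type*} [Fintype Ω] [DecidableEq α] {μ : Ω → ℝ}

theorem prob_nonneg (hμ : ∀ ω, 0 ≤ μ ω) (X : Ω → α) (a : α) : 0 ≤ prob μ X a :=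
  Finset.sum_nonneg fun ω _ => by split_ifs; exacts [hμ ω, le_rfl]

theorem le_prob_apply (hμ : ∀ ω, 0 ≤ μ ω) (X : Ω → α) (ω : Ω) : μ ω ≤ prob μ X (X ω) := by
  simpa [prob] using Finset.single_le_sum (f := fun ω' => if X ω' = X ω then μ ω' else 0)
    (fun ω' _ => by split_ifs; exacts [hμ ω', le_rfl]) (Finset.mem_univ ω)

theorem prob_apply_pos (hμ : ∀ ω, 0 ≤ μ ω) (X : Ω → α) {ω : Ω} (hω : 0 < μ ω) :
    0 < prob μ X (X ω) :=
  hω.trans_le (le_prob_apply hμ X ω)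

theorem exists_pos_of_prob_pos {X : Ω → α} {a : α} (h : 0 < prob μ X a) :
    ∃ ω, X ω = a ∧ 0 < μ ω := by
  obtain ⟨ω, -, hω⟩ := Finset.exists_lt_of_sum_lt (f := fun _ => (0 : ℝ)) (by simpa [prob] using h)
  by_cases hX : X ω = a
  · exact ⟨ω, hX, by simpa [hX] using hω⟩
  · simp [hX] at hω

variable [Fintype α]

theorem sum_mul_comp_eq_sum_prob_mul (μ : Ω → ℝ) (X : Ω → α) (f : α → ℝ) :
    ∑ ω, μ ω * f (X ω) = ∑ a, prob μ X a * f a := by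
  simp only [prob, Finset.sum_mul, ite_mul, zero_mul]
  rw [Finset.sum_comm]
  simp

theorem sum_prob (μ : Ω → ℝ) (X : Ω → α) : ∑ a, prob μ X a = ∑ ω, μ ω := by
  simpa using (sum_mul_comp_eq_sum_prob_mul μ X fun _ => 1).symm

theorem ent_eq_neg_sum_mul_log (μ : Ω → ℝ) (X : Ω → α) :
    ent μ X = -∑ ω, μ ω * log (prob μ X (X ω)) := by
  rw [ent, sum_mul_comp_eq_sum_prob_mul μ X fun a => log (prob μ X a)]
  simp [Real.negMulLog]

theorem condEnt_sub_condEnt {β γ : Type*} [Fintype β] [DecidableEq β] [Fintype γ]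
    [DecidableEq γ] (μ : Ω → ℝ) (X : Ω → α) (Y : Ω → β) (Z : Ω → γ) :
    condEnt μ Y Z - condEnt μ X Z = ∑ ω, μ ω *
      (log (prob μ (fun ω => (X ω, Z ω)) (X ω, Z ω))
        - log (prob μ (fun ω => (Y ω, Z ω)) (Y ω, Z ω))) := by
  simp only [condEnt, ent_eq_neg_sum_mul_log, mul_sub, Finset.sum_sub_distrib]
  ring

end Prob

theorem statement11_general {Ω : Type*} [Fintype Ω] (μ : Ω → ℝ)
    (hμ0 : ∀ ω, 0 ≤ μ ω)
    {α β γ : Type*} [Fintype α] [DecidableEq α] [Fintype β] [DecidableEq β]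
    [Fintype γ] [DecidableEq γ]
    (X : Ω → α) (X' : Ω → β) (Z : Ω → γ)
    (q : α → β → γ → ℝ) (hq0 : ∀ x x' z, 0 ≤ q x x' z)
    (hq1 : ∀ x' z, ∑ x, q x x' z = 1)
    (hqas : ∀ ω, 0 < μ ω → 0 < q (X ω) (X' ω) (Z ω)) :
    condEnt μ X' Z - condEnt μ X Z
      + ∑ ω, μ ω *
          Real.log ((prob μ (fun ω' => (X ω', X' ω', Z ω')) (X ω, X' ω, Z ω)
              / prob μ (fun ω' => (X ω', Z ω')) (X ω, Z ω))
            / q (X ω) (X' ω) (Z ω)) ≥ 0 := by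
  set W : Ω → α × β × γ := fun ω => (X ω, X' ω, Z ω)
  set r : α × β × γ → ℝ := fun v => prob μ (fun ω => (X' ω, Z ω)) v.2 * q v.1 v.2.1 v.2.2
  have hlog : ∀ ω, μ ω * (log (prob μ (fun ω => (X ω, Z ω)) (X ω, Z ω))
        - log (prob μ (fun ω => (X' ω, Z ω)) (X' ω, Z ω)))
      + μ ω * log (prob μ W (W ω) / prob μ (fun ω => (X ω, Z ω)) (X ω, Z ω)
        / q (X ω) (X' ω) (Z ω))
      = μ ω * log (prob μ W (W ω) / r (W ω)) := by
    intro ω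
    rcases (hμ0 ω).eq_or_lt with h0 | hω
    · simp [← h0]
    rw [← mul_add]
    exact congrArg _ <| log_sub_log_add_log_div_div (prob_apply_pos hμ0 _ hω)
      (prob_apply_pos hμ0 _ hω) (prob_apply_pos hμ0 W hω) (hqas ω hω)
  have hr_nonneg : ∀ v, 0 ≤ r v := fun v => mul_nonneg (prob_nonneg hμ0 _ _) (hq0 _ _ _)
  have hr_pos : ∀ v, 0 < prob μ W v → 0 < r v := by
    intro v hv
    obtain ⟨ω, rfl, hω⟩ := exists_pos_of_prob_pos hv
    exact mul_pos (prob_apply_pos hμ0 _ hω) (hqas ω hω)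
  have hr_sum : ∑ v, r v = ∑ v, prob μ W v := by
    rw [sum_prob, ← sum_prob μ (fun ω => (X' ω, Z ω)), Fintype.sum_prod_type, Finset.sum_comm]
    refine Finset.sum_congr rfl fun w _ => ?_
    simp only [r, ← Finset.mul_sum, hq1, mul_one]
  rw [ge_iff_le, condEnt_sub_condEnt, ← Finset.sum_add_distrib,
    Finset.sum_congr rfl fun ω _ => hlog ω, sum_mul_comp_eq_sum_prob_mul μ W fun v => log (prob μ W v / r v)]
  exact sum_mul_log_div_nonneg (prob_nonneg hμ0 W) hr_nonneg hr_pos hr_sum.le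

/-- Second-law-like entropy bound for a single subsystem:
`H(X'|Z) − H(X|Z) + E[ln(p(X'|X,Z)/q(X|X',Z))] ≥ 0`
for any backward probability kernel `q` with `q(X|X',Z) > 0` almost surely. -/
theorem statement11 {Ω : Type*} [Fintype Ω] (μ : Ω → ℝ)
    (hμ0 : ∀ ω, 0 ≤ μ ω) (hμ1 : ∑ ω, μ ω = 1)
    {α β γ : Type*} [Fintype α] [DecidableEq α] [Fintype β] [DecidableEq β]
    [Fintype γ] [DecidableEq γ]
    (X : Ω → α) (X' : Ω → β) (Z : Ω → γ)
    (q : α → β → γ → ℝ) (hq0 : ∀ x x' z, 0 ≤ q x x' z)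
    (hq1 : ∀ x' z, ∑ x, q x x' z = 1)
    (hqas : ∀ ω, 0 < μ ω → 0 < q (X ω) (X' ω) (Z ω)) :
    condEnt μ X' Z - condEnt μ X Z
      + ∑ ω, μ ω *
          Real.log ((prob μ (fun ω' => (X ω', X' ω', Z ω')) (X ω, X' ω, Z ω)
              / prob μ (fun ω' => (X ω', Z ω')) (X ω, Z ω))
            / q (X ω) (X' ω) (Z ω)) ≥ 0 :=
  statement11_general μ hμ0 X X' Z q hq0 hq1 hqas
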